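/- arXiv:1912.01587 — 5 statements merged into one kernel-verified Lean document; each statement's English description precedes it below -/
import Mathlib

section
/- Let F : ℝ → (-∞, ∞] be proper, convex and lower semi-continuous, let a ≤ b be reals with dom(F) ∩ [a, b] ≠ ∅, and let G(u) = F(u) + I_{[a,b]}(u) where I_{[a,b]} is the indicator function of [a,b]. Then for every σ > 0 and u ∈ ℝ, prox_{σG}(u) = proj_{[a,b]}(prox_{σF}(u)), where proj_{[a,b]}(t) = min(max(t, a), b). -/
open scoped Classical

/-- The objective function of the proximal minimisation problem. -/
noncomputable def proxObj {H : Type*} [NormedAddCommGroup H]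
    (σ : ℝ) (F : H → EReal) (u x : H) : EReal :=
  ((‖x - u‖ ^ 2 / 2 : ℝ) : EReal) + (σ : EReal) * F x

/-- `F` is proper, convex and lower semi-continuous. -/
def ProperConvexLsc {H : Type*} [NormedAddCommGroup H] [NormedSpace ℝ H]
    (F : H → EReal) : Prop :=
  (∃ x, F x ≠ ⊤) ∧ (∀ x, F x ≠ ⊥) ∧
    (∀ x y : H, ∀ a b : ℝ, 0 ≤ a → 0 ≤ b → a + b = 1 →
      F (a • x + b • y) ≤ (a : EReal) * F x + (b : EReal) * F y) ∧
    LowerSemicontinuous F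

private lemma sqConvex (A B t : ℝ) (h0 : 0 ≤ t) (h1 : t ≤ 1) :
    (t*A + (1-t)*B)^2 ≤ t * A^2 + (1-t) * B^2 := by
  nlinarith [sq_nonneg (A - B), mul_nonneg h0 (sub_nonneg.2 h1)]

private lemma sqStrict (A B : ℝ) (h : A ≠ B) :
    ((A+B)/2)^2 < A^2/2 + B^2/2 := by
  have h2 : 0 < (A - B)^2 := sq_pos_of_ne_zero (sub_ne_zero.2 h)
  nlinarith [h2]

/-- For `F : ℝ → (-∞,∞]` proper convex lsc with `dom F ∩ [a,b] ≠ ∅`,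
`G = F + I_{[a,b]}`, `σ > 0` and `p = prox_{σF}(u)`:
a point `q` is the prox of `G` at `u` if and only if
`q = proj_{[a,b]}(p) = min(max(p,a),b)`. -/
theorem statement6 (F : ℝ → EReal) (hF : ProperConvexLsc F)
    (a b : ℝ) (hab : a ≤ b) (hdom : ∃ x ∈ Set.Icc a b, F x ≠ ⊤)
    (σ : ℝ) (hσ : 0 < σ) (u p : ℝ)
    (hp : ∀ x : ℝ, proxObj σ F u p ≤ proxObj σ F u x) (q : ℝ) :
    (∀ x : ℝ,
      proxObj σ (fun v => F v + if v ∈ Set.Icc a b then (0 : EReal) else ⊤) u q ≤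
        proxObj σ (fun v => F v + if v ∈ Set.Icc a b then (0 : EReal) else ⊤) u x) ↔
    q = min (max p a) b := by
  obtain ⟨x₀, hx₀K, hx₀⟩ := hdom
  obtain ⟨-, hbot, hconv, -⟩ := hF
  set G : ℝ → EReal := fun v => F v + if v ∈ Set.Icc a b then (0 : EReal) else ⊤ with hG
  set f : ℝ → ℝ := fun x => (F x).toReal with hf
  set g : ℝ → ℝ := fun x => ‖x - u‖ ^ 2 / 2 + σ * f x with hgdef
  -- coercion facts for the F-objective
  have hcoe : ∀ x, F x ≠ ⊤ → proxObj σ F u x = ((g x : ℝ) : EReal) := by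
    intro x hx
    have hx' : F x = ((f x : ℝ) : EReal) := (EReal.coe_toReal hx (hbot x)).symm
    simp only [proxObj, hgdef, hx', ← EReal.coe_mul, ← EReal.coe_add]
  have htop : ∀ x, F x = ⊤ → proxObj σ F u x = ⊤ := by
    intro x hx
    simp only [proxObj, hx]
    rw [EReal.mul_top_of_pos (EReal.coe_pos.2 hσ),
      EReal.add_top_of_ne_bot (EReal.coe_ne_bot _)]
  -- coercion facts for the G-objective
  have hGcoe : ∀ x, x ∈ Set.Icc a b → F x ≠ ⊤ → proxObj σ G u x = ((g x : ℝ) : EReal) := by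
    intro x hxK hx
    have hGx : G x = F x := by simp only [hG]; rw [if_pos hxK, add_zero]
    have hx' : G x = ((f x : ℝ) : EReal) := by
      rw [hGx]; exact (EReal.coe_toReal hx (hbot x)).symm
    simp only [proxObj, hgdef]
    rw [hx', ← EReal.coe_mul, ← EReal.coe_add]
  have hGtop : ∀ x, (x ∉ Set.Icc a b ∨ F x = ⊤) → proxObj σ G u x = ⊤ := by
    intro x hx
    have hGx : G x = ⊤ := by
      rcases hx with hx | hx
      · simp only [hG, hx, if_neg hx]
        exact EReal.add_top_of_ne_bot (hbot x)
      · simp only [hG, hx]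
        split
        · simp
        · simp
    simp only [proxObj]
    rw [hGx, EReal.mul_top_of_pos (EReal.coe_pos.2 hσ),
      EReal.add_top_of_ne_bot (EReal.coe_ne_bot _)]
  -- p is in the domain of F
  have hpD : F p ≠ ⊤ := by
    intro h
    have h1 := hp x₀
    rw [htop p h, hcoe x₀ hx₀, top_le_iff] at h1
    exact EReal.coe_ne_top _ h1
  have hpg : ∀ x, F x ≠ ⊤ → g p ≤ g x := by
    intro x hx
    have h1 := hp x
    rw [hcoe p hpD, hcoe x hx] at h1
    exact EReal.coe_le_coe_iff.mp h1
  -- convexity of f on its domain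
  have hkeyf : ∀ x y t : ℝ, F x ≠ ⊤ → F y ≠ ⊤ → 0 ≤ t → t ≤ 1 →
      F (t*x + (1-t)*y) ≠ ⊤ ∧ f (t*x + (1-t)*y) ≤ t * f x + (1-t) * f y := by
    intro x y t hx hy h0 h1
    have hc := hconv x y t (1-t) h0 (by linarith) (by ring)
    rw [smul_eq_mul, smul_eq_mul] at hc
    have hFx : F x = ((f x : ℝ) : EReal) := (EReal.coe_toReal hx (hbot x)).symm
    have hFy : F y = ((f y : ℝ) : EReal) := (EReal.coe_toReal hy (hbot y)).symm
    rw [hFx, hFy, ← EReal.coe_mul, ← EReal.coe_mul, ← EReal.coe_add] at hc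
    have hmt : F (t*x + (1-t)*y) ≠ ⊤ := by
      intro h
      rw [h, top_le_iff] at hc
      exact EReal.coe_ne_top _ hc
    refine ⟨hmt, ?_⟩
    have h2 := EReal.toReal_le_toReal hc (hbot _) (EReal.coe_ne_top _)
    rwa [EReal.toReal_coe] at h2
  -- convexity of g on its domain
  have hkey : ∀ x y t : ℝ, F x ≠ ⊤ → F y ≠ ⊤ → 0 ≤ t → t ≤ 1 →
      F (t*x + (1-t)*y) ≠ ⊤ ∧ g (t*x + (1-t)*y) ≤ t * g x + (1-t) * g y := by
    intro x y t hx hy h0 h1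
    obtain ⟨hmt, hfm⟩ := hkeyf x y t hx hy h0 h1
    refine ⟨hmt, ?_⟩
    have hq : ‖t*x + (1-t)*y - u‖ ^ 2 / 2 ≤ t * (‖x-u‖^2/2) + (1-t) * (‖y-u‖^2/2) := by
      simp only [Real.norm_eq_abs, sq_abs]
      have h3 : t*x + (1-t)*y - u = t*(x-u) + (1-t)*(y-u) := by ring
      rw [h3]
      have := sqConvex (x-u) (y-u) t h0 h1
      linarith
    have h4 : σ * f (t*x + (1-t)*y) ≤ σ * (t * f x + (1-t) * f y) :=
      mul_le_mul_of_nonneg_left hfm hσ.le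
    simp only [hgdef]
    nlinarith [hq, h4]
  -- a point between two domain points is in the domain and its g value is ≤ the max
  have hseg : ∀ x y z : ℝ, F x ≠ ⊤ → F y ≠ ⊤ → x ≤ z → z ≤ y →
      F z ≠ ⊤ ∧ g z ≤ max (g x) (g y) := by
    intro x y z hx hy hxz hzy
    rcases eq_or_lt_of_le (hxz.trans hzy) with h | h
    · have hzx : z = x := le_antisymm (h ▸ hzy) hxz
      exact ⟨hzx ▸ hx, hzx ▸ le_max_left _ _⟩
    · have hyx : (0:ℝ) < y - x := by linarith
      have ht0 : 0 ≤ (y - z)/(y - x) := div_nonneg (by linarith) hyx.le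
      have ht1 : (y - z)/(y - x) ≤ 1 := (div_le_one hyx).mpr (by linarith)
      obtain ⟨hD, hgle⟩ := hkey x y ((y - z)/(y - x)) hx hy ht0 ht1
      have hz : (y - z)/(y - x)*x + (1-(y - z)/(y - x))*y = z := by
        field_simp
        ring
      rw [hz] at hD hgle
      refine ⟨hD, hgle.trans ?_⟩
      nlinarith [mul_le_mul_of_nonneg_left (le_max_left (g x) (g y)) ht0,
        mul_le_mul_of_nonneg_left (le_max_right (g x) (g y))
          (by linarith : (0:ℝ) ≤ 1 - (y - z)/(y - x))]
  set c := min (max p a) b with hcdef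
  have hcK : c ∈ Set.Icc a b := ⟨le_min (le_max_right _ _) hab, min_le_right _ _⟩
  -- c is in the domain and minimizes g over [a,b] ∩ dom F
  have hcmin : F c ≠ ⊤ ∧ ∀ x ∈ Set.Icc a b, F x ≠ ⊤ → g c ≤ g x := by
    rcases le_or_gt p a with hpa | hap
    · have hca : c = a := by rw [hcdef, max_eq_right hpa, min_eq_left hab]
      rw [hca]
      refine ⟨(hseg p x₀ a hpD hx₀ hpa hx₀K.1).1, ?_⟩
      intro x hxK hx
      have h5 := (hseg p x a hpD hx hpa hxK.1).2
      rwa [max_eq_right (hpg x hx)] at h5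
    · rcases le_or_gt b p with hbp | hpb
      · have hcb : c = b := by
          rw [hcdef, max_eq_left (hab.trans hbp), min_eq_right hbp]
        rw [hcb]
        refine ⟨(hseg x₀ p b hx₀ hpD hx₀K.2 hbp).1, ?_⟩
        intro x hxK hx
        have h5 := (hseg x p b hx hpD hxK.2 hbp).2
        rwa [max_eq_left (hpg x hx)] at h5
      · have hcp : c = p := by
          rw [hcdef, max_eq_left hap.le, min_eq_left hpb.le]
        rw [hcp]
        exact ⟨hpD, fun x _ hx => hpg x hx⟩
  constructor
  · -- q minimizes G-objective → q = c
    intro hq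
    -- q is feasible
    have hqF : q ∈ Set.Icc a b ∧ F q ≠ ⊤ := by
      by_contra h
      have h' : q ∉ Set.Icc a b ∨ F q = ⊤ := by tauto
      have h1 := hq c
      rw [hGtop q h', hGcoe c hcK hcmin.1, top_le_iff] at h1
      exact EReal.coe_ne_top _ h1
    obtain ⟨hqK, hqD⟩ := hqF
    have hgqc : g q ≤ g c := by
      have h1 := hq c
      rw [hGcoe q hqK hqD, hGcoe c hcK hcmin.1] at h1
      exact EReal.coe_le_coe_iff.mp h1
    have hgcq : g c ≤ g q := hcmin.2 q hqK hqD
    by_contra hne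
    -- strict convexity at the midpoint gives a contradiction
    set m := (q + c)/2 with hm
    have hm2 : (1/2:ℝ)*q + (1-1/2)*c = m := by rw [hm]; ring
    obtain ⟨hmD, hfm⟩ := hkeyf q c (1/2) hqD hcmin.1 (by norm_num) (by norm_num)
    rw [hm2] at hmD hfm
    have hmK : m ∈ Set.Icc a b := by
      constructor
      · have h6 := hqK.1; have h7 := hcK.1; rw [hm]; linarith
      · have h6 := hqK.2; have h7 := hcK.2; rw [hm]; linarith
    have hstrict : g m < g c := by
      have hq2 : ‖m - u‖^2/2 < (1/2) * (‖q-u‖^2/2) + (1-1/2) * (‖c-u‖^2/2) := by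
        simp only [Real.norm_eq_abs, sq_abs]
        have h3 : m - u = ((q-u) + (c-u))/2 := by rw [hm]; ring
        rw [h3]
        have hne' : q - u ≠ c - u := fun h => hne (by linarith)
        have := sqStrict (q-u) (c-u) hne'
        linarith
      have h4 : σ * f m ≤ σ * ((1/2) * f q + (1-1/2) * f c) :=
        mul_le_mul_of_nonneg_left hfm hσ.le
      simp only [hgdef]
      have hgq : g q = g c := le_antisymm hgqc hgcq
      simp only [hgdef] at hgq
      nlinarith [hq2, h4]
    have h1 := hq m
    rw [hGcoe q hqK hqD, hGcoe m hmK hmD] at h1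
    have := EReal.coe_le_coe_iff.mp h1
    have hgq : g q = g c := le_antisymm hgqc hgcq
    linarith
  · -- q = c → q minimizes the G-objective
    rintro rfl
    intro x
    by_cases hx : x ∈ Set.Icc a b ∧ F x ≠ ⊤
    · rw [hGcoe _ hcK hcmin.1, hGcoe x hx.1 hx.2]
      exact EReal.coe_le_coe_iff.mpr (hcmin.2 x hx.1 hx.2)
    · have h' : x ∉ Set.Icc a b ∨ F x = ⊤ := by tauto
      rw [hGtop x h']
      exact le_top
end

section
/- For all x, y ∈ [0, ∞), the pointwise Kullback–Leibler integrand g(x,y) = x - y - y·log(x/y) (with the conventions 0·log(x/0)=0 and g(0,y)=∞ for y>0) satisfies (x - y)² ≤ (2y/3 + 4x/3)·g(x,y). -/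
open scoped Classical

/-- The pointwise Kullback–Leibler integrand `g(x,y) = x - y - y·log(x/y)`, with
the conventions `0·log(x/0) = 0` (so `g(x,0) = x`) and `g(0,y) = ∞` for `y > 0`. -/
noncomputable def klg (x y : ℝ) : EReal :=
  if y = 0 then (x : EReal)
  else if x = 0 then ⊤
  else ((x - y - y * Real.log (x / y) : ℝ) : EReal)

private lemma klg_aux_deriv (t : ℝ) (ht : 0 < t) :
    HasDerivAt (fun s : ℝ => (s - 1) * (s + 5) / (4 * s + 2) - Real.log s)
      (4 * (t - 1) ^ 3 / (t * (4 * t + 2) ^ 2)) t := by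
  have h2 : (4 * t + 2) ≠ 0 := by positivity
  have h1 : HasDerivAt (fun s : ℝ => (s - 1) * (s + 5) / (4 * s + 2))
      (((1 * (t + 5) + (t - 1) * 1) * (4 * t + 2) - (t - 1) * (t + 5) * (4 * 1)) /
        (4 * t + 2) ^ 2) t :=
    (((hasDerivAt_id t).sub_const 1).mul ((hasDerivAt_id t).add_const 5)).div
      (((hasDerivAt_id t).const_mul 4).add_const 2) h2
  have h := h1.sub (Real.hasDerivAt_log ht.ne')
  refine h.congr_deriv ?_
  have ht' : t ≠ 0 := ht.ne'
  field_simp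
  ring

private lemma klg_key (t : ℝ) (ht : 0 < t) :
    Real.log t ≤ (t - 1) * (t + 5) / (4 * t + 2) := by
  set f : ℝ → ℝ := fun s => (s - 1) * (s + 5) / (4 * s + 2) - Real.log s with hf
  have f1 : f 1 = 0 := by simp [hf]
  have hfnn : 0 ≤ f t := by
    rcases le_or_gt 1 t with h | h
    · have mono : MonotoneOn f (Set.Ici 1) := by
        apply monotoneOn_of_deriv_nonneg (convex_Ici 1)
        · exact fun s hs =>
            ((klg_aux_deriv s (lt_of_lt_of_le one_pos hs)).continuousAt).continuousWithinAt
        · intro s hs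
          rw [interior_Ici] at hs
          exact ((klg_aux_deriv s (lt_trans one_pos hs)).differentiableAt).differentiableWithinAt
        · intro s hs
          rw [interior_Ici] at hs
          have hs0 : 0 < s := lt_trans one_pos hs
          rw [(klg_aux_deriv s hs0).deriv]
          have hs1 : (1:ℝ) < s := hs
          apply div_nonneg
          · nlinarith [sq_nonneg (s - 1)]
          · positivity
      have := mono Set.self_mem_Ici h h
      linarith [f1 ▸ this]
    · have anti : AntitoneOn f (Set.Icc t 1) := by
        apply antitoneOn_of_deriv_nonpos (convex_Icc t 1)
        · exact fun s hs =>
            ((klg_aux_deriv s (lt_of_lt_of_le ht hs.1)).continuousAt).continuousWithinAt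
        · intro s hs
          rw [interior_Icc] at hs
          exact ((klg_aux_deriv s (lt_trans ht hs.1)).differentiableAt).differentiableWithinAt
        · intro s hs
          rw [interior_Icc] at hs
          have hs0 : 0 < s := lt_trans ht hs.1
          rw [(klg_aux_deriv s hs0).deriv]
          have h1 : (s - 1) ^ 3 ≤ 0 := by nlinarith [hs.2, sq_nonneg (s-1)]
          have h2 : (0:ℝ) < s * (4 * s + 2) ^ 2 := by positivity
          apply div_nonpos_of_nonpos_of_nonneg (by linarith) h2.le
      have := anti (Set.left_mem_Icc.2 h.le) (Set.right_mem_Icc.2 h.le) h.le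
      linarith [f1 ▸ this]
  simp only [hf] at hfnn
  linarith

/-- The key pointwise estimate behind the L¹-coercivity of the Kullback–Leibler
divergence: `(x - y)² ≤ (2y/3 + 4x/3)·g(x,y)` for all `x, y ≥ 0`. -/
theorem statement10 (x y : ℝ) (hx : 0 ≤ x) (hy : 0 ≤ y) :
    (((x - y) ^ 2 : ℝ) : EReal) ≤ ((2 * y / 3 + 4 * x / 3 : ℝ) : EReal) * klg x y := by
  unfold klg
  rcases eq_or_lt_of_le hy with hy0 | hy0
  · rw [if_pos hy0.symm, ← EReal.coe_mul, EReal.coe_le_coe_iff]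
    nlinarith [sq_nonneg x]
  · rw [if_neg hy0.ne']
    rcases eq_or_lt_of_le hx with hx0 | hx0
    · rw [if_pos hx0.symm, EReal.mul_top_of_pos (EReal.coe_pos.2 (by nlinarith : (0:ℝ) < 2 * y / 3 + 4 * x / 3))]
      exact le_top
    · rw [if_neg hx0.ne', ← EReal.coe_mul, EReal.coe_le_coe_iff]
      have ht : 0 < x / y := div_pos hx0 hy0
      have hk := klg_key (x / y) ht
      have hd : (0:ℝ) < 4 * (x / y) + 2 := by positivity
      have hk' : y * (4 * x + 2 * y) * Real.log (x / y) ≤ (x - y) * (x + 5 * y) := by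
        have := mul_le_mul_of_nonneg_left hk (by positivity : (0:ℝ) ≤ y * (4 * x + 2 * y))
        calc y * (4 * x + 2 * y) * Real.log (x / y)
            ≤ y * (4 * x + 2 * y) * ((x / y - 1) * (x / y + 5) / (4 * (x / y) + 2)) := this
          _ = (x - y) * (x + 5 * y) := by
              field_simp
      nlinarith [sq_nonneg (x - y), hy0, hx0, mul_pos hy0 hx0]
end

section
/- Let Ω' ⊂ ℝᵈ be measurable and let KL(v,f) = ∫_{Ω'} f·(v/f - log(v/f) - 1) dx for v, f ∈ L¹(Ω') with v, f ≥ 0 a.e. (with value ∞ otherwise and standard conventions where v or f vanish). Then ‖v - f‖₁² ≤ ( (2/3)‖f‖₁ + (4/3)‖v‖₁ ) · KL(v,f) for all v, f ∈ L¹(Ω'), and in particular ‖v‖₁ ≤ 2(KL(v,f) + ‖f‖₁) and ‖f‖₁ ≤ 2(KL(v,f) + ‖v‖₁). -/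
open MeasureTheory
open scoped ENNReal Classical

/-- Pointwise Kullback–Leibler integrand with values in `[0,∞]`:
`x - y - y·log(x/y)`, set to `x` where `y = 0` and to `∞` where `x = 0 < y`. -/
noncomputable def klInt (x y : ℝ) : ℝ≥0∞ :=
  if y = 0 then ENNReal.ofReal x
  else if x = 0 then ⊤
  else ENNReal.ofReal (x - y - y * Real.log (x / y))

/-- The Kullback–Leibler divergence `KL(v,f) = ∫_{Ω'} f(v/f - log(v/f) - 1)` for
`v, f ≥ 0` a.e. on `Ω' ⊆ ℝᵈ`, with value `∞` otherwise. -/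
noncomputable def KLdiv {d : ℕ} (Ω' : Set (Fin d → ℝ))
    (v f : (Fin d → ℝ) → ℝ) : ℝ≥0∞ :=
  if (∀ᵐ x ∂(volume.restrict Ω'), 0 ≤ v x) ∧ (∀ᵐ x ∂(volume.restrict Ω'), 0 ≤ f x)
  then ∫⁻ x in Ω', klInt (v x) (f x)
  else ⊤


section Aux
open Set
lemma psi_mono : MonotoneOn (fun t : ℝ => t - 1/t - 2*Real.log t) (Set.Ioi 0) := by
  have hderiv : ∀ t ∈ interior (Set.Ioi (0:ℝ)),
      HasDerivWithinAt (fun t : ℝ => t - 1/t - 2*Real.log t)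
        ((1 - 1/t)^2) (interior (Set.Ioi (0:ℝ))) t := by
    intro t ht
    rw [interior_Ioi] at ht
    have ht0 : t ≠ 0 := ne_of_gt ht
    have h1 : HasDerivAt (fun t : ℝ => t - 1/t - 2*Real.log t)
        (1 - (-(1/t^2)) - 2*(1/t)) t := by
      have := ((hasDerivAt_id t).fun_sub ((hasDerivAt_inv ht0))).fun_sub
        ((Real.hasDerivAt_log ht0).const_mul 2)
      simpa [one_div, mul_comm] using this
    have : (1 : ℝ) - (-(1/t^2)) - 2*(1/t) = (1 - 1/t)^2 := by
      field_simp; ring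
    rw [this] at h1
    exact h1.hasDerivWithinAt
  exact monotoneOn_of_hasDerivWithinAt_nonneg (convex_Ioi 0)
    (by
      refine ContinuousOn.sub (ContinuousOn.sub continuousOn_id ?_) ?_
      · exact continuousOn_const.div continuousOn_id (fun x hx => ne_of_gt hx)
      · exact continuousOn_const.mul (Real.continuousOn_log.mono (fun x hx => ne_of_gt hx)))
    hderiv (fun x _ => sq_nonneg _)

lemma phi_hasDeriv {t : ℝ} (ht : 0 < t) :
    HasDerivAt (fun t : ℝ => (t-1)*(t+5) - (4*t+2)*Real.log t)
      (2*(t - 1/t - 2*Real.log t)) t := by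
  have ht0 : t ≠ 0 := ne_of_gt ht
  have h1 : HasDerivAt (fun t : ℝ => (t-1)*(t+5)) (1*(t+5) + (t-1)*1) t :=
    (((hasDerivAt_id t).sub_const 1).mul ((hasDerivAt_id t).add_const 5))
  have h2 : HasDerivAt (fun t : ℝ => (4*t+2)*Real.log t)
      (4*Real.log t + (4*t+2)*(1/t)) t := by
    have := (((hasDerivAt_id t).const_mul 4).add_const 2).fun_mul (Real.hasDerivAt_log ht0)
    simpa [mul_comm, one_div] using this
  have := h1.fun_sub h2
  refine this.congr_deriv ?_
  field_simp
  ring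

lemma phi_nonneg {t : ℝ} (ht : 0 < t) :
    0 ≤ (t-1)*(t+5) - (4*t+2)*Real.log t := by
  set φ : ℝ → ℝ := fun t => (t-1)*(t+5) - (4*t+2)*Real.log t with hφ
  have hφ1 : φ 1 = 0 := by simp [hφ]
  have hpsi : ∀ s : ℝ, 1 ≤ s → 0 ≤ s - 1/s - 2*Real.log s := by
    intro s hs
    have := psi_mono (mem_Ioi.mpr one_pos) (mem_Ioi.mpr (lt_of_lt_of_le one_pos hs)) hs
    simpa using this
  have hpsi' : ∀ s : ℝ, 0 < s → s ≤ 1 → s - 1/s - 2*Real.log s ≤ 0 := by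
    intro s hs hs1
    have := psi_mono (mem_Ioi.mpr hs) (mem_Ioi.mpr one_pos) hs1
    simpa using this
  have hcont : ∀ s : Set ℝ, (∀ x ∈ s, x ≠ 0) → ContinuousOn φ s := by
    intro s hs
    exact ((continuousOn_id.sub continuousOn_const).mul
      (continuousOn_id.add continuousOn_const)).sub
      (((continuousOn_const.mul continuousOn_id).add continuousOn_const).mul
        (Real.continuousOn_log.mono hs))
  rcases le_or_gt 1 t with h1 | h1
  · have hmono : MonotoneOn φ (Ici 1) := by
      apply monotoneOn_of_hasDerivWithinAt_nonneg (convex_Ici 1)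
        (hcont _ (fun x hx => by have : (1:ℝ) ≤ x := hx; positivity))
        (f' := fun t => 2*(t - 1/t - 2*Real.log t))
      · intro x hx
        rw [interior_Ici] at hx
        exact (phi_hasDeriv (lt_trans one_pos hx)).hasDerivWithinAt
      · intro x hx
        rw [interior_Ici] at hx
        have := hpsi x hx.le
        linarith
    have := hmono (self_mem_Ici) (mem_Ici.mpr h1) h1
    rw [hφ1] at this
    exact this
  · have hanti : AntitoneOn φ (Ioc 0 1) := by
      apply antitoneOn_of_hasDerivWithinAt_nonpos (convex_Ioc 0 1)
        (hcont _ (fun x hx => ne_of_gt hx.1))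
        (f' := fun t => 2*(t - 1/t - 2*Real.log t))
      · intro x hx
        rw [interior_Ioc] at hx
        exact (phi_hasDeriv hx.1).hasDerivWithinAt
      · intro x hx
        rw [interior_Ioc] at hx
        have := hpsi' x hx.1 hx.2.le
        linarith
    have := hanti (mem_Ioc.mpr ⟨ht, h1.le⟩) (right_mem_Ioc.mpr one_pos) h1.le
    rw [hφ1] at this
    exact this

lemma subst_ty {x y : ℝ} (hx : 0 < x) (hy : 0 < y) :
    ∃ t : ℝ, 0 < t ∧ x = t*y ∧ Real.log (x/y) = Real.log t := by
  refine ⟨x/y, div_pos hx hy, (div_mul_cancel₀ x (ne_of_gt hy)).symm, rfl⟩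

lemma key_real {x y : ℝ} (hx : 0 < x) (hy : 0 < y) :
    3*(x-y)^2 ≤ (2*y+4*x)*(x - y - y*Real.log (x/y)) := by
  obtain ⟨t, ht, rfl, hl⟩ := subst_ty hx hy
  rw [hl]
  have h := phi_nonneg ht
  nlinarith [mul_nonneg h (sq_nonneg y)]

lemma twolog_le {t : ℝ} (ht : 0 < t) : 2*Real.log t ≤ 4*Real.sqrt t - 4 := by
  have hs : 0 < Real.sqrt t := Real.sqrt_pos.mpr ht
  have h1 : Real.log (Real.sqrt t) ≤ Real.sqrt t - 1 :=
    Real.log_le_sub_one_of_pos hs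
  have h2 : Real.log (Real.sqrt t) = Real.log t / 2 := Real.log_sqrt ht.le
  linarith [h2 ▸ h1]

lemma second_real {x y : ℝ} (hx : 0 < x) (hy : 0 < y) :
    x ≤ 2*(x - y - y*Real.log (x/y)) + 2*y := by
  obtain ⟨t, ht, rfl, hl⟩ := subst_ty hx hy
  rw [hl]
  have h := twolog_le ht
  have hs := Real.sq_sqrt ht.le
  nlinarith [sq_nonneg (Real.sqrt t - 2), mul_le_mul_of_nonneg_left h hy.le,
    mul_pos hy ht, sq_nonneg (Real.sqrt t)]

lemma third_real {x y : ℝ} (hx : 0 < x) (hy : 0 < y) :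
    y ≤ 2*(x - y - y*Real.log (x/y)) + 2*x := by
  obtain ⟨t, ht, rfl, hl⟩ := subst_ty hx hy
  rw [hl]
  have h := twolog_le ht
  have hs := Real.sq_sqrt ht.le
  nlinarith [sq_nonneg (2*Real.sqrt t - 1), mul_le_mul_of_nonneg_left h hy.le]

lemma klInt_sq_le {x y : ℝ} (hx : 0 ≤ x) (hy : 0 ≤ y) :
    ENNReal.ofReal ((x-y)^2) ≤ ENNReal.ofReal ((2/3)*y + (4/3)*x) * klInt x y := by
  unfold klInt
  rcases eq_or_lt_of_le hy with hy0 | hy0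
  · rw [if_pos hy0.symm, ← ENNReal.ofReal_mul (by positivity)]
    apply ENNReal.ofReal_le_ofReal
    nlinarith
  · rw [if_neg (ne_of_gt hy0)]
    rcases eq_or_lt_of_le hx with hx0 | hx0
    · rw [if_pos hx0.symm]
      rw [ENNReal.mul_top]
      · exact le_top
      · simp only [ne_eq, ENNReal.ofReal_eq_zero, not_le]
        positivity
    · rw [if_neg (ne_of_gt hx0), ← ENNReal.ofReal_mul (by positivity)]
      apply ENNReal.ofReal_le_ofReal
      have := key_real hx0 hy0
      nlinarith

lemma klInt_first {x y : ℝ} (hx : 0 ≤ x) (hy : 0 ≤ y) :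
    ENNReal.ofReal x ≤ 2 * klInt x y + 2 * ENNReal.ofReal y := by
  unfold klInt
  rcases eq_or_lt_of_le hy with hy0 | hy0
  · rw [if_pos hy0.symm]
    calc ENNReal.ofReal x ≤ 2 * ENNReal.ofReal x := by
          nth_rewrite 1 [← one_mul (ENNReal.ofReal x)]
          exact mul_le_mul_left (by norm_num) _
      _ ≤ _ := le_add_of_nonneg_right zero_le
  · rw [if_neg (ne_of_gt hy0)]
    rcases eq_or_lt_of_le hx with hx0 | hx0
    · rw [if_pos hx0.symm]
      simp
    · rw [if_neg (ne_of_gt hx0)]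
      have := second_real hx0 hy0
      calc ENNReal.ofReal x
          ≤ ENNReal.ofReal (2*(x - y - y*Real.log (x/y)) + 2*y) :=
            ENNReal.ofReal_le_ofReal this
        _ ≤ ENNReal.ofReal (2*(x - y - y*Real.log (x/y))) + ENNReal.ofReal (2*y) :=
            ENNReal.ofReal_add_le
        _ = _ := by rw [ENNReal.ofReal_mul (by norm_num), ENNReal.ofReal_mul (by norm_num)]
                    norm_num

lemma klInt_third {x y : ℝ} (hx : 0 ≤ x) (hy : 0 ≤ y) :
    ENNReal.ofReal y ≤ 2 * klInt x y + 2 * ENNReal.ofReal x := by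
  unfold klInt
  rcases eq_or_lt_of_le hy with hy0 | hy0
  · rw [if_pos hy0.symm, ← hy0]
    simp
  · rw [if_neg (ne_of_gt hy0)]
    rcases eq_or_lt_of_le hx with hx0 | hx0
    · rw [if_pos hx0.symm]
      simp
    · rw [if_neg (ne_of_gt hx0)]
      have := third_real hx0 hy0
      calc ENNReal.ofReal y
          ≤ ENNReal.ofReal (2*(x - y - y*Real.log (x/y)) + 2*x) :=
            ENNReal.ofReal_le_ofReal this
        _ ≤ ENNReal.ofReal (2*(x - y - y*Real.log (x/y))) + ENNReal.ofReal (2*x) :=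
            ENNReal.ofReal_add_le
        _ = _ := by rw [ENNReal.ofReal_mul (by norm_num), ENNReal.ofReal_mul (by norm_num)]
                    norm_num

lemma klInt_measurable : Measurable (fun p : ℝ × ℝ => klInt p.1 p.2) := by
  unfold klInt
  apply Measurable.ite (measurableSet_eq_fun measurable_snd measurable_const)
  · exact ENNReal.measurable_ofReal.comp measurable_fst
  · apply Measurable.ite (measurableSet_eq_fun measurable_fst measurable_const)
    · exact measurable_const
    · apply ENNReal.measurable_ofReal.comp
      apply Measurable.sub (measurable_fst.sub measurable_snd)
      exact measurable_snd.mul (Real.measurable_log.comp (measurable_fst.div measurable_snd))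

end Aux

/-- `‖v - f‖₁² ≤ ((2/3)‖f‖₁ + (4/3)‖v‖₁)·KL(v,f)`, and in particular
`‖v‖₁ ≤ 2(KL(v,f) + ‖f‖₁)` and `‖f‖₁ ≤ 2(KL(v,f) + ‖v‖₁)`, for all
`v, f ∈ L¹(Ω')` on a measurable set `Ω' ⊆ ℝᵈ`. -/
theorem statement11 {d : ℕ} (Ω' : Set (Fin d → ℝ)) (hΩ : MeasurableSet Ω')
    (v f : (Fin d → ℝ) → ℝ)
    (hv : IntegrableOn v Ω') (hf : IntegrableOn f Ω') :
    (ENNReal.ofReal ((∫ x in Ω', |v x - f x|) ^ 2) ≤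
      ENNReal.ofReal ((2 / 3) * (∫ x in Ω', |f x|) + (4 / 3) * (∫ x in Ω', |v x|)) *
        KLdiv Ω' v f) ∧
    (ENNReal.ofReal (∫ x in Ω', |v x|) ≤
      2 * (KLdiv Ω' v f + ENNReal.ofReal (∫ x in Ω', |f x|))) ∧
    (ENNReal.ofReal (∫ x in Ω', |f x|) ≤
      2 * (KLdiv Ω' v f + ENNReal.ofReal (∫ x in Ω', |v x|))) := by
  set μ := volume.restrict Ω' with hμ
  have hA0 : 0 ≤ ∫ x in Ω', |v x| := integral_nonneg (fun x => abs_nonneg _)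
  have hB0 : 0 ≤ ∫ x in Ω', |f x| := integral_nonneg (fun x => abs_nonneg _)
  by_cases hzero : (∫ x in Ω', |v x|) = 0 ∧ (∫ x in Ω', |f x|) = 0
  · -- v = f = 0 a.e.
    have hv0 : v =ᵐ[μ] 0 := by
      have := (integral_eq_zero_iff_of_nonneg (fun x => abs_nonneg (v x)) hv.abs).mp hzero.1
      filter_upwards [this] with x hx
      simpa [abs_eq_zero] using hx
    have hf0 : f =ᵐ[μ] 0 := by
      have := (integral_eq_zero_iff_of_nonneg (fun x => abs_nonneg (f x)) hf.abs).mp hzero.2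
      filter_upwards [this] with x hx
      simpa [abs_eq_zero] using hx
    have hvf0 : (∫ x in Ω', |v x - f x|) = 0 := by
      have hcong : (fun x => |v x - f x|) =ᵐ[μ] (fun _ => (0:ℝ)) := by
        filter_upwards [hv0, hf0] with x h1 h2
        simp only [Pi.zero_apply] at h1 h2
        simp [h1, h2]
      rw [integral_congr_ae hcong]
      simp
    refine ⟨?_, ?_, ?_⟩
    · simp [hμ, hvf0]
    · simp [hμ, hzero.1]
    · simp [hμ, hzero.2]
  · have hcpos : 0 < (2/3) * (∫ x in Ω', |f x|) + (4/3) * (∫ x in Ω', |v x|) := by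
      rcases (not_and_or.mp hzero) with h | h
      · have : 0 < ∫ x in Ω', |v x| := lt_of_le_of_ne hA0 (Ne.symm h)
        linarith
      · have : 0 < ∫ x in Ω', |f x| := lt_of_le_of_ne hB0 (Ne.symm h)
        linarith
    by_cases hKL : KLdiv Ω' v f = ⊤
    · refine ⟨?_, ?_, ?_⟩
      · rw [hKL, ENNReal.mul_top (by simpa [ENNReal.ofReal_eq_zero, not_le] using hcpos)]
        exact le_top
      · simp [hKL]
      · simp [hKL]
    · -- KL finite
      have hcond : (∀ᵐ x ∂μ, 0 ≤ v x) ∧ (∀ᵐ x ∂μ, 0 ≤ f x) := by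
        by_contra h
        exact hKL (by rw [KLdiv, if_neg h])
      have hKLeq : KLdiv Ω' v f = ∫⁻ x in Ω', klInt (v x) (f x) := by
        rw [KLdiv, if_pos hcond]
      set K := ∫⁻ x in Ω', klInt (v x) (f x) with hK
      have hva : AEMeasurable v μ := hv.aemeasurable
      have hfa : AEMeasurable f μ := hf.aemeasurable
      have hkla : AEMeasurable (fun x => klInt (v x) (f x)) μ :=
        klInt_measurable.comp_aemeasurable (hva.prodMk hfa)
      -- |v| = v a.e., |f| = f a.e.
      have hvabs : (fun x => |v x|) =ᵐ[μ] v := by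
        filter_upwards [hcond.1] with x hx using abs_of_nonneg hx
      have hfabs : (fun x => |f x|) =ᵐ[μ] f := by
        filter_upwards [hcond.2] with x hx using abs_of_nonneg hx
      have hAeq : ENNReal.ofReal (∫ x in Ω', |v x|) = ∫⁻ x, ENNReal.ofReal (v x) ∂μ := by
        rw [ofReal_integral_eq_lintegral_ofReal hv.abs
          (Filter.Eventually.of_forall (fun x => abs_nonneg _))]
        exact lintegral_congr_ae (by filter_upwards [hvabs] with x hx; rw [hx])
      have hBeq : ENNReal.ofReal (∫ x in Ω', |f x|) = ∫⁻ x, ENNReal.ofReal (f x) ∂μ := by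
        rw [ofReal_integral_eq_lintegral_ofReal hf.abs
          (Filter.Eventually.of_forall (fun x => abs_nonneg _))]
        exact lintegral_congr_ae (by filter_upwards [hfabs] with x hx; rw [hx])
      refine ⟨?_, ?_, ?_⟩
      · -- main inequality via Cauchy-Schwarz
        rw [hKLeq]
        set c : (Fin d → ℝ) → ℝ := fun x => (2/3) * f x + (4/3) * v x with hc
        have hci : Integrable c μ := (hf.const_mul _).add (hv.const_mul _)
        have hcnn : 0 ≤ᵐ[μ] c := by
          filter_upwards [hcond.1, hcond.2] with x h1 h2
          simp only [hc, Pi.zero_apply]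
          positivity
        set g : (Fin d → ℝ) → ℝ≥0∞ := fun x => (ENNReal.ofReal (c x)) ^ (1/2:ℝ) with hg
        set h : (Fin d → ℝ) → ℝ≥0∞ := fun x => (klInt (v x) (f x)) ^ (1/2:ℝ) with hh
        have hgmeas : AEMeasurable g μ := (hci.aemeasurable.ennreal_ofReal).pow_const _
        have hhmeas : AEMeasurable h μ := hkla.pow_const _
        have e2 : ∀ a : ℝ≥0∞, (a ^ (2:ℝ)) ^ (1/2:ℝ) = a := fun a => by
          rw [← ENNReal.rpow_mul]
          norm_num
        have e3 : ∀ a : ℝ≥0∞, (a ^ (1/2:ℝ)) ^ (2:ℝ) = a := fun a => by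
          rw [← ENNReal.rpow_mul]
          norm_num
        have hpt : ∀ᵐ x ∂μ, ENNReal.ofReal |v x - f x| ≤ g x * h x := by
          filter_upwards [hcond.1, hcond.2] with x h1 h2
          have hkey := klInt_sq_le h1 h2
          have e1 : ENNReal.ofReal ((v x - f x)^2) = (ENNReal.ofReal |v x - f x|) ^ (2:ℝ) := by
            rw [show ((2:ℝ)) = ((2:ℕ):ℝ) by norm_num,
              ENNReal.rpow_natCast (ENNReal.ofReal |v x - f x|) 2,
              ← ENNReal.ofReal_pow (abs_nonneg _), sq_abs]
          calc ENNReal.ofReal |v x - f x|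
              = ((ENNReal.ofReal |v x - f x|) ^ (2:ℝ)) ^ (1/2:ℝ) := (e2 _).symm
            _ = (ENNReal.ofReal ((v x - f x)^2)) ^ (1/2:ℝ) := by rw [e1]
            _ ≤ (ENNReal.ofReal ((2/3) * f x + (4/3) * v x) * klInt (v x) (f x)) ^ (1/2:ℝ) :=
                ENNReal.rpow_le_rpow hkey (by norm_num)
            _ = g x * h x := ENNReal.mul_rpow_of_nonneg _ _ (by norm_num)
        have hconj : Real.HolderConjugate 2 2 := Real.HolderConjugate.two_two
        have hCS := ENNReal.lintegral_mul_le_Lp_mul_Lq μ hconj hgmeas hhmeas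
        have hg2 : ∫⁻ x, g x ^ (2:ℝ) ∂μ
            = ENNReal.ofReal ((2/3) * (∫ x in Ω', |f x|) + (4/3) * (∫ x in Ω', |v x|)) := by
          have hint : ∫ x, c x ∂μ = (2/3) * (∫ x in Ω', |f x|) + (4/3) * (∫ x in Ω', |v x|) := by
            rw [hc]
            rw [integral_add (hf.const_mul _) (hv.const_mul _), integral_const_mul,
              integral_const_mul, integral_congr_ae hvabs.symm, integral_congr_ae hfabs.symm]
          rw [← hint, ofReal_integral_eq_lintegral_ofReal hci hcnn]
          exact lintegral_congr (fun x => (e3 _))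
        have hh2 : ∫⁻ x, h x ^ (2:ℝ) ∂μ = K := by
          rw [hK]
          exact lintegral_congr (fun x => (e3 _))
        have habsint : Integrable (fun x => |v x - f x|) μ := (hv.sub hf).abs
        have hLeq : ENNReal.ofReal (∫ x in Ω', |v x - f x|)
            = ∫⁻ x, ENNReal.ofReal |v x - f x| ∂μ :=
          ofReal_integral_eq_lintegral_ofReal habsint
            (Filter.Eventually.of_forall (fun x => abs_nonneg _))
        have hmain : ∫⁻ x, ENNReal.ofReal |v x - f x| ∂μ
            ≤ (∫⁻ x, g x ^ (2:ℝ) ∂μ) ^ (1/2:ℝ) * (∫⁻ x, h x ^ (2:ℝ) ∂μ) ^ (1/2:ℝ) :=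
          le_trans (lintegral_mono_ae hpt) hCS
        calc ENNReal.ofReal ((∫ x in Ω', |v x - f x|) ^ 2)
            = (ENNReal.ofReal (∫ x in Ω', |v x - f x|)) ^ (2:ℝ) := by
              rw [show ((2:ℝ)) = ((2:ℕ):ℝ) by norm_num, ENNReal.rpow_natCast,
                ← ENNReal.ofReal_pow (integral_nonneg (fun x => abs_nonneg _))]
          _ ≤ ((∫⁻ x, g x ^ (2:ℝ) ∂μ) ^ (1/2:ℝ) * (∫⁻ x, h x ^ (2:ℝ) ∂μ) ^ (1/2:ℝ)) ^ (2:ℝ) := by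
              rw [hLeq]
              exact ENNReal.rpow_le_rpow hmain (by norm_num)
          _ = (∫⁻ x, g x ^ (2:ℝ) ∂μ) * (∫⁻ x, h x ^ (2:ℝ) ∂μ) := by
              rw [ENNReal.mul_rpow_of_nonneg _ _ (by norm_num : (0:ℝ) ≤ 2), e3, e3]
          _ = ENNReal.ofReal ((2/3) * (∫ x in Ω', |f x|) + (4/3) * (∫ x in Ω', |v x|)) * K := by
              rw [hg2, hh2]
      · rw [hKLeq, hAeq, hBeq]
        calc ∫⁻ x, ENNReal.ofReal (v x) ∂μ
            ≤ ∫⁻ x, (2 * klInt (v x) (f x) + 2 * ENNReal.ofReal (f x)) ∂μ := by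
              apply lintegral_mono_ae
              filter_upwards [hcond.1, hcond.2] with x h1 h2 using klInt_first h1 h2
          _ = 2 * K + 2 * ∫⁻ x, ENNReal.ofReal (f x) ∂μ := by
              rw [lintegral_add_left' (hkla.const_mul 2),
                lintegral_const_mul' _ _ ENNReal.ofNat_ne_top,
                lintegral_const_mul' _ _ ENNReal.ofNat_ne_top]
          _ = 2 * (K + ∫⁻ x, ENNReal.ofReal (f x) ∂μ) := by rw [mul_add]
      · rw [hKLeq, hAeq, hBeq]
        calc ∫⁻ x, ENNReal.ofReal (f x) ∂μ
            ≤ ∫⁻ x, (2 * klInt (v x) (f x) + 2 * ENNReal.ofReal (v x)) ∂μ := by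
              apply lintegral_mono_ae
              filter_upwards [hcond.1, hcond.2] with x h1 h2 using klInt_third h1 h2
          _ = 2 * K + 2 * ∫⁻ x, ENNReal.ofReal (v x) ∂μ := by
              rw [lintegral_add_left' (hkla.const_mul 2),
                lintegral_const_mul' _ _ ENNReal.ofNat_ne_top,
                lintegral_const_mul' _ _ ENNReal.ofNat_ne_top]
          _ = 2 * (K + ∫⁻ x, ENNReal.ofReal (v x) ∂μ) := by rw [mul_add]
end

section
/- Let 𝒳 = 𝒳₁ × ⋯ × 𝒳_N and 𝒴 = 𝒴₁ × ⋯ × 𝒴_M be products of Hilbert spaces with the ℓ²-product norm, and let 𝒦 : 𝒳 → 𝒴 be a bounded linear operator given in block form by components 𝒦_{m,n} : 𝒳ₙ → 𝒴ₘ with ‖𝒦_{m,n}‖ ≤ L_{m,n}. Then the operator norm of 𝒦 is bounded by the largest singular value of the M×N matrix L = (L_{m,n}), i.e., ‖𝒦‖ ≤ σ_max(L). -/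
/-- Norm bound for a block operator between ℓ²-products of Hilbert spaces: if
`𝒦 : 𝒳₁ × ⋯ × 𝒳_N → 𝒴₁ × ⋯ × 𝒴_M` is given blockwise by `(𝒦x)ₘ = ∑ₙ 𝒦ₘₙ xₙ` with
`‖𝒦ₘₙ‖ ≤ Lₘₙ`, then `‖𝒦x‖ ≤ σ_max(L)·‖x‖`, where `σ_max(L)` is the largest
singular value of `L`, i.e. the operator norm of `L : ℝᴺ → ℝᴹ` with Euclidean
norms. -/
theorem statement15 {M N : ℕ} (X : Fin N → Type*) (Y : Fin M → Type*)
    [∀ n, NormedAddCommGroup (X n)] [∀ n, InnerProductSpace ℝ (X n)]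
    [∀ n, CompleteSpace (X n)]
    [∀ m, NormedAddCommGroup (Y m)] [∀ m, InnerProductSpace ℝ (Y m)]
    [∀ m, CompleteSpace (Y m)]
    (K : ∀ (m : Fin M) (n : Fin N), X n →L[ℝ] Y m)
    (L : Matrix (Fin M) (Fin N) ℝ)
    (hL : ∀ m n, ‖K m n‖ ≤ L m n) (x : ∀ n, X n) :
    Real.sqrt (∑ m, ‖∑ n, K m n (x n)‖ ^ 2) ≤
      ‖LinearMap.toContinuousLinearMap (Matrix.toEuclideanLin L)‖ *
        Real.sqrt (∑ n, ‖x n‖ ^ 2) := by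
  set T := LinearMap.toContinuousLinearMap (Matrix.toEuclideanLin L) with hT
  set v : EuclideanSpace ℝ (Fin N) := WithLp.toLp 2 (fun n => ‖x n‖) with hv
  have hvnorm : ‖v‖ = Real.sqrt (∑ n, ‖x n‖ ^ 2) := by
    rw [EuclideanSpace.norm_eq]
    congr 1
    refine Finset.sum_congr rfl fun n _ => ?_
    simp [hv, Real.norm_eq_abs, sq_abs]
  have hTv : ∀ m, (T v) m = ∑ n, L m n * ‖x n‖ := by
    intro m
    show (Matrix.toEuclideanLin L v) m = _
    rw [Matrix.toEuclideanLin_apply]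
    rfl
  have h1 : Real.sqrt (∑ m, ‖∑ n, K m n (x n)‖ ^ 2) ≤ ‖T v‖ := by
    rw [EuclideanSpace.norm_eq]
    apply Real.sqrt_le_sqrt
    apply Finset.sum_le_sum
    intro m _
    apply pow_le_pow_left₀ (norm_nonneg _)
    calc ‖∑ n, K m n (x n)‖ ≤ ∑ n, ‖K m n (x n)‖ := norm_sum_le _ _
      _ ≤ ∑ n, L m n * ‖x n‖ := by
          refine Finset.sum_le_sum fun n _ => ?_
          exact le_trans ((K m n).le_opNorm (x n))
            (mul_le_mul_of_nonneg_right (hL m n) (norm_nonneg _))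
      _ ≤ |∑ n, L m n * ‖x n‖| := le_abs_self _
      _ = ‖(T v) m‖ := by rw [hTv m, Real.norm_eq_abs]
  calc Real.sqrt (∑ m, ‖∑ n, K m n (x n)‖ ^ 2) ≤ ‖T v‖ := h1
    _ ≤ ‖T‖ * ‖v‖ := T.le_opNorm v
    _ = _ := by rw [hvnorm]
end

section
/- Let X, Y be Banach spaces and K : X → Y linear continuous; let S : Y → [0,∞] be a proper convex discrepancy, R : X → (-∞,∞] a proper convex regulariser, α > 0, δ ≥ 0, u† ∈ X with K*w† ∈ ∂R(u†) for some w† ∈ Y*, S(Ku†) ≤ δ, and let u⁺ be a minimizer of u ↦ S(Ku) + αR(u). Then the Bregman distance satisfies D_{K*w†}^R(u⁺, u†) ≤ (1/α)( S*(α w†) + S*(-α w†) + 2δ ), where D_{x*}^R(y,x) = R(y) - R(x) - ⟨x*, y - x⟩. -/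
/-- Convexity for an `EReal`-valued function. -/
def EConvex {X : Type*} [NormedAddCommGroup X] [NormedSpace ℝ X]
    (F : X → EReal) : Prop :=
  ∀ x y : X, ∀ a b : ℝ, 0 ≤ a → 0 ≤ b → a + b = 1 →
    F (a • x + b • y) ≤ (a : EReal) * F x + (b : EReal) * F y

/-- The Fenchel conjugate `S*(φ) = sup_y ⟨φ,y⟩ - S(y)`. -/
noncomputable def econj {Y : Type*} [NormedAddCommGroup Y] [NormedSpace ℝ Y]
    (S : Y → EReal) (φ : Y →L[ℝ] ℝ) : EReal :=
  ⨆ y : Y, ((φ y : ℝ) : EReal) - S y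

/-- Convergence-rate estimate in the Bregman distance: with `K : X → Y` linear
continuous, `S : Y → [0,∞]` a proper convex discrepancy, `R : X → (-∞,∞]` a
proper convex regulariser, `α > 0`, `δ ≥ 0`, a source condition
`K*w† ∈ ∂R(u†)`, data fidelity `S(Ku†) ≤ δ` and `u⁺` a minimizer of
`u ↦ S(Ku) + αR(u)`, the Bregman distance
`D_{K*w†}^R(u⁺,u†) = R(u⁺) - R(u†) - ⟨K*w†, u⁺ - u†⟩` satisfies
`D ≤ (1/α)(S*(αw†) + S*(-αw†) + 2δ)`. -/
theorem statement16 {X Y : Type*} [NormedAddCommGroup X] [NormedSpace ℝ X]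
    [NormedAddCommGroup Y] [NormedSpace ℝ Y]
    (K : X →L[ℝ] Y)
    (S : Y → EReal) (hS0 : ∀ y, 0 ≤ S y) (hSproper : ∃ y, S y ≠ ⊤)
    (hSconv : EConvex S)
    (R : X → EReal) (hRproper : ∃ x, R x ≠ ⊤) (hRbot : ∀ x, R x ≠ ⊥)
    (hRconv : EConvex R)
    (α δ : ℝ) (hα : 0 < α) (hδ : 0 ≤ δ)
    (udag : X) (wdag : Y →L[ℝ] ℝ)
    (hsource : ∀ x : X, R udag + ((wdag (K (x - udag)) : ℝ) : EReal) ≤ R x)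
    (hdata : S (K udag) ≤ ((δ : ℝ) : EReal))
    (uplus : X)
    (hmin : ∀ x : X, S (K uplus) + (α : EReal) * R uplus ≤
      S (K x) + (α : EReal) * R x) :
    R uplus - R udag - ((wdag (K (uplus - udag)) : ℝ) : EReal) ≤
      ((α⁻¹ : ℝ) : EReal) *
        (econj S (α • wdag) + econj S (-(α • wdag)) + ((2 * δ : ℝ) : EReal)) := by

  -- basic positivity facts
  have hSnb : ∀ y, S y ≠ ⊥ := fun y => (lt_of_lt_of_le (by simp : (⊥ : EReal) < 0) (hS0 y)).ne'
  -- R udag is finite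
  obtain ⟨x₀, hx₀⟩ := hRproper
  have hRud_ne_top : R udag ≠ ⊤ := by
    intro h
    have hs := hsource x₀
    rw [h, EReal.top_add_coe, top_le_iff] at hs
    exact hx₀ hs
  set r : ℝ := (R udag).toReal with hr
  have hRud : R udag = (r : EReal) := (EReal.coe_toReal hRud_ne_top (hRbot udag)).symm
  -- S(K udag) is finite
  have hSKd_ne_top : S (K udag) ≠ ⊤ := (hdata.trans_lt (EReal.coe_lt_top δ)).ne
  set sd : ℝ := (S (K udag)).toReal with hsd
  have hSKd : S (K udag) = (sd : EReal) := (EReal.coe_toReal hSKd_ne_top (hSnb _)).symm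
  have hsdδ : sd ≤ δ := by rw [hSKd, EReal.coe_le_coe_iff] at hdata; exact hdata
  -- the minimality inequality with real right-hand side
  have hmin' : S (K uplus) + (α : EReal) * R uplus ≤ ((sd + α * r : ℝ) : EReal) := by
    have := hmin udag
    rwa [hRud, hSKd, ← EReal.coe_mul, ← EReal.coe_add] at this
  -- R uplus is finite
  have hRup_ne_top : R uplus ≠ ⊤ := by
    intro h
    rw [h, EReal.mul_top_of_pos (by exact_mod_cast hα : (0:EReal) < (α:EReal)),
      EReal.add_top_of_ne_bot (hSnb _), top_le_iff] at hmin'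
    exact (EReal.coe_lt_top _).ne hmin'
  set b : ℝ := (R uplus).toReal with hb
  have hRup : R uplus = (b : EReal) := (EReal.coe_toReal hRup_ne_top (hRbot uplus)).symm
  -- S(K uplus) is finite
  have hSKp_ne_top : S (K uplus) ≠ ⊤ := by
    intro h
    rw [h, hRup, ← EReal.coe_mul, EReal.top_add_coe, top_le_iff] at hmin'
    exact (EReal.coe_lt_top _).ne hmin'
  set s : ℝ := (S (K uplus)).toReal with hs
  have hSKp : S (K uplus) = (s : EReal) := (EReal.coe_toReal hSKp_ne_top (hSnb _)).symm
  have hs0 : 0 ≤ s := by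
    have := hS0 (K uplus); rw [hSKp] at this; exact_mod_cast this
  -- real minimality inequality
  have hminR : s + α * b ≤ sd + α * r := by
    rw [hSKp, hRup, ← EReal.coe_mul, ← EReal.coe_add, EReal.coe_le_coe_iff] at hmin'
    exact hmin'
  -- Fenchel bounds
  have hF1 : ((α * wdag (K udag) - sd : ℝ) : EReal) ≤ econj S (α • wdag) := by
    have h := le_iSup (fun y => (((α • wdag) y : ℝ) : EReal) - S y) (K udag)
    rwa [ContinuousLinearMap.smul_apply, smul_eq_mul, hSKd, ← EReal.coe_sub] at h
  have hF2 : ((-(α * wdag (K uplus)) - s : ℝ) : EReal) ≤ econj S (-(α • wdag)) := by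
    have h := le_iSup (fun y => (((-(α • wdag)) y : ℝ) : EReal) - S y) (K uplus)
    rwa [ContinuousLinearMap.neg_apply, ContinuousLinearMap.smul_apply, smul_eq_mul,
      hSKp, ← EReal.coe_sub] at h
  -- the left-hand side is a real number
  have hLHS : R uplus - R udag - ((wdag (K (uplus - udag)) : ℝ) : EReal)
      = ((b - r - wdag (K (uplus - udag)) : ℝ) : EReal) := by
    rw [hRup, hRud, ← EReal.coe_sub, ← EReal.coe_sub]
  rw [hLHS]
  -- split on whether the conjugates are infinite
  by_cases h1 : econj S (α • wdag) = ⊤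
  · rw [h1, EReal.top_add_of_ne_bot (ne_bot_of_le_ne_bot (EReal.coe_ne_bot _) hF2),
      EReal.top_add_coe, EReal.mul_top_of_pos (by exact_mod_cast inv_pos.mpr hα : (0:EReal) < ((α⁻¹:ℝ):EReal))]
    exact le_top
  by_cases h2 : econj S (-(α • wdag)) = ⊤
  · rw [h2, EReal.add_top_of_ne_bot (ne_bot_of_le_ne_bot (EReal.coe_ne_bot _) hF1),
      EReal.top_add_coe, EReal.mul_top_of_pos (by exact_mod_cast inv_pos.mpr hα : (0:EReal) < ((α⁻¹:ℝ):EReal))]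
    exact le_top
  -- both conjugates are real
  set c₁ : ℝ := (econj S (α • wdag)).toReal with hc₁
  set c₂ : ℝ := (econj S (-(α • wdag))).toReal with hc₂
  have hC1 : econj S (α • wdag) = (c₁ : EReal) :=
    (EReal.coe_toReal h1 (ne_bot_of_le_ne_bot (EReal.coe_ne_bot _) hF1)).symm
  have hC2 : econj S (-(α • wdag)) = (c₂ : EReal) :=
    (EReal.coe_toReal h2 (ne_bot_of_le_ne_bot (EReal.coe_ne_bot _) hF2)).symm
  have hc1R : α * wdag (K udag) - sd ≤ c₁ := by
    rw [hC1, EReal.coe_le_coe_iff] at hF1; exact hF1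
  have hc2R : -(α * wdag (K uplus)) - s ≤ c₂ := by
    rw [hC2, EReal.coe_le_coe_iff] at hF2; exact hF2
  rw [hC1, hC2, ← EReal.coe_add, ← EReal.coe_add, ← EReal.coe_mul, EReal.coe_le_coe_iff]
  have hpair : wdag (K (uplus - udag)) = wdag (K uplus) - wdag (K udag) := by
    rw [map_sub, map_sub]
  rw [hpair]
  rw [← mul_le_mul_iff_right₀ hα, ← mul_assoc, mul_inv_cancel₀ hα.ne', one_mul]
  nlinarith [hminR, hc1R, hc2R, hsdδ, hs0]
end
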